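/- arXiv:1211.2763 — 3 statements merged into one kernel-verified Lean document; each statement's English description precedes it below -/
import Mathlib

section
/- Under the quantile design with Hölder-continuous density ψ (exponent α ∈ (0,1]) bounded below by a positive constant, for each fixed i_max, uniformly over k and 1 ≤ i ≤ i_max one has t_{k+i} - t_k = (i δ_n)/(T ψ(t_k)) · (1 + O(δ_n^α)); more precisely, |t_{k+i} - t_k - (i δ_n)/(T ψ(t_k))| ≤ (i δ_n)/(T ψ(t_k)) · L · (C₂ i_max δ_n)^α / inf ψ, where C₂ = (T inf ψ)^{-1}. -/
open MeasureTheory Set intervalIntegral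

/-!
Write `Δ = t (k + i) - t k`. The quantile equations give `∫ ψ = i δₙ / T` over `[t k, t (k + i)]`.
Freezing `ψ` at `ψ (t k)` on this interval costs at most `L Δ^α Δ` by Hölder continuity, and the
lower bound `inf ψ` on the density gives `Δ ≤ i δₙ / (T inf ψ) ≤ C₂ i_max δₙ`.
-/

section QuantileSpacing

variable {ψ : ℝ → ℝ} {a b L α : ℝ}

theorem mul_sub_le_integral_of_le {m : ℝ} (hab : a ≤ b) (hψ : IntervalIntegrable ψ volume a b)
    (hmψ : ∀ x ∈ Icc a b, m ≤ ψ x) : m * (b - a) ≤ ∫ x in a..b, ψ x := by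
  simpa [mul_comm] using integral_mono_on hab intervalIntegrable_const hψ hmψ

theorem strictMonoOn_integral_of_pos {lo hi : ℝ} (hψ : ContinuousOn ψ (Icc lo hi))
    (hpos : ∀ x ∈ Icc lo hi, 0 < ψ x) :
    StrictMonoOn (fun x => ∫ s in lo..x, ψ s) (Icc lo hi) := by
  intro x hx y hy hxy
  have hint : ∀ u ∈ Icc lo hi, ∀ v ∈ Icc lo hi, IntervalIntegrable ψ volume u v :=
    fun u hu v hv => (hψ.mono (uIcc_subset_Icc hu hv)).intervalIntegrable
  have hxy_pos : 0 < ∫ s in x..y, ψ s :=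
    intervalIntegral_pos_of_pos_on (hint x hx y hy)
      (fun s hs => hpos s ⟨hx.1.trans hs.1.le, hs.2.le.trans hy.2⟩) hxy
  have hsplit := integral_interval_sub_left (hint lo ⟨le_rfl, hx.1.trans hx.2⟩ y hy)
    (hint lo ⟨le_rfl, hx.1.trans hx.2⟩ x hx)
  simp only
  linarith

theorem abs_integral_sub_mul_le_of_holder (hab : a ≤ b) (hψ : IntervalIntegrable ψ volume a b)
    (hL : 0 ≤ L) (hα : 0 ≤ α) (hHolder : ∀ x ∈ Icc a b, |ψ x - ψ a| ≤ L * |x - a| ^ α) :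
    |(∫ x in a..b, ψ x) - (b - a) * ψ a| ≤ L * (b - a) ^ α * (b - a) := by
  have hbound : ∀ x ∈ uIoc a b, ‖ψ x - ψ a‖ ≤ L * (b - a) ^ α := by
    intro x hx
    rw [uIoc_of_le hab] at hx
    calc ‖ψ x - ψ a‖ ≤ L * |x - a| ^ α := hHolder x (Ioc_subset_Icc_self hx)
      _ ≤ L * (b - a) ^ α := by
        gcongr
        rw [abs_of_nonneg (by linarith [hx.1])]
        linarith [hx.2]
  have := norm_integral_le_of_norm_le_const hbound
  rwa [integral_sub hψ intervalIntegrable_const, intervalIntegral.integral_const, smul_eq_mul,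
    Real.norm_eq_abs,
    abs_of_nonneg (sub_nonneg.2 hab)] at this

theorem abs_sub_sub_div_le_of_integral_eq {m c X : ℝ} (hab : a ≤ b)
    (hψ : IntervalIntegrable ψ volume a b) (hm : 0 < m) (hmψ : ∀ x ∈ Icc a b, m ≤ ψ x)
    (hL : 0 ≤ L) (hα : 0 ≤ α) (hHolder : ∀ x ∈ Icc a b, |ψ x - ψ a| ≤ L * |x - a| ^ α)
    (hc : ∫ x in a..b, ψ x = c) (hcX : c / m ≤ X) :
    |b - a - c / ψ a| ≤ c / ψ a * (L * X ^ α / m) := by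
  have hψa : 0 < ψ a := hm.trans_le (hmψ a ⟨le_rfl, hab⟩)
  have hlen : b - a ≤ c / m := by
    rw [le_div_iff₀ hm, mul_comm, ← hc]
    exact mul_sub_le_integral_of_le hab hψ hmψ
  have hlen_nonneg : 0 ≤ b - a := sub_nonneg.2 hab
  calc |b - a - c / ψ a| = |(∫ x in a..b, ψ x) - (b - a) * ψ a| / ψ a := by
        rw [hc, ← abs_of_pos hψa, ← abs_div, abs_sub_comm, abs_of_pos hψa]
        congr 1
        field_simp
    _ ≤ L * (b - a) ^ α * (b - a) / ψ a := by
        gcongr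
        exact abs_integral_sub_mul_le_of_holder hab hψ hL hα hHolder
    _ ≤ L * X ^ α * (c / m) / ψ a := by
        have hX : b - a ≤ X := hlen.trans hcX
        gcongr
        exact mul_nonneg hL (Real.rpow_nonneg (hlen_nonneg.trans hX) α)
    _ = c / ψ a * (L * X ^ α / m) := by ring

end QuantileSpacing

theorem stmt_4_general (T : ℝ) (hT : 0 < T) (ψ : ℝ → ℝ)
    (hcont : ContinuousOn ψ (Set.Icc 0 T))
    (hinf : 0 < sInf (ψ '' Set.Icc 0 T))
    (L α : ℝ) (hL : 0 ≤ L) (hα : α ∈ Set.Ioc (0 : ℝ) 1)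
    (hHolder : ∀ s ∈ Set.Icc (0 : ℝ) T, ∀ u ∈ Set.Icc (0 : ℝ) T,
      |ψ s - ψ u| ≤ L * |s - u| ^ α)
    (n : ℕ) (δn : ℝ) (hδ : 0 < δn)
    (t : ℕ → ℝ)
    (htmem : ∀ k ≤ n, t k ∈ Set.Icc (0 : ℝ) T)
    (hquant : ∀ k ≤ n, ∫ s in (0 : ℝ)..(t k), ψ s = k * δn / T)
    (imax : ℕ) :
    ∀ k i : ℕ, 1 ≤ i → i ≤ imax → k + i ≤ n →
      |t (k + i) - t k - (i * δn) / (T * ψ (t k))| ≤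
        (i * δn) / (T * ψ (t k)) *
          (L * ((T * sInf (ψ '' Set.Icc 0 T))⁻¹ * imax * δn) ^ α /
            sInf (ψ '' Set.Icc 0 T)) := by
  intro k i _ hi hkin
  set m := sInf (ψ '' Icc 0 T)
  have hk : k ≤ n := (Nat.le_add_right k i).trans hkin
  have hmψ : ∀ x ∈ Icc 0 T, m ≤ ψ x := fun x hx =>
    csInf_le (isCompact_Icc.image_of_continuousOn hcont).bddBelow ⟨x, hx, rfl⟩
  have hint : ∀ u ∈ Icc 0 T, ∀ v ∈ Icc 0 T, IntervalIntegrable ψ volume u v :=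
    fun u hu v hv => (hcont.mono (uIcc_subset_Icc hu hv)).intervalIntegrable
  have hle : t k ≤ t (k + i) := by
    refine ((strictMonoOn_integral_of_pos hcont fun x hx => hinf.trans_le (hmψ x hx)).le_iff_le
      (htmem k hk) (htmem _ hkin)).1 ?_
    simp only [hquant k hk, hquant _ hkin]
    gcongr
    exact_mod_cast Nat.le_add_right k i
  have hI : ∫ s in t k..t (k + i), ψ s = i * δn / T := by
    rw [← integral_interval_sub_left (hint 0 ⟨le_rfl, hT.le⟩ _ (htmem _ hkin))
      (hint 0 ⟨le_rfl, hT.le⟩ _ (htmem k hk)), hquant _ hkin, hquant k hk]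
    push_cast
    ring
  have hsub : Icc (t k) (t (k + i)) ⊆ Icc 0 T := Icc_subset_Icc (htmem k hk).1 (htmem _ hkin).2
  have hbound : i * δn / T / m ≤ (T * m)⁻¹ * imax * δn := by
    rw [div_div, div_eq_mul_inv, mul_comm (i * δn), mul_assoc]
    gcongr
  simpa only [div_div] using abs_sub_sub_div_le_of_integral_eq hle (hint _ (htmem k hk) _ (htmem _ hkin))
    hinf (fun x hx => hmψ x (hsub hx)) hL hα.1.le
    (fun x hx => hHolder x (hsub hx) _ (htmem k hk)) hI hbound

/-- First-order expansion of the quantile-design spacings: with a Hölder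
density `ψ` bounded below, uniformly over `k` and `1 ≤ i ≤ i_max`,
`|t (k+i) - t k - i δ_n/(T ψ(t k))| ≤ (i δ_n/(T ψ(t k))) · L (C₂ i_max δ_n)^α / inf ψ`
where `C₂ = (T inf ψ)⁻¹`. -/
theorem stmt_4 (T : ℝ) (hT : 0 < T) (ψ : ℝ → ℝ)
    (hcont : ContinuousOn ψ (Set.Icc 0 T))
    (hinf : 0 < sInf (ψ '' Set.Icc 0 T))
    (L α : ℝ) (hL : 0 ≤ L) (hα : α ∈ Set.Ioc (0 : ℝ) 1)
    (hHolder : ∀ s ∈ Set.Icc (0 : ℝ) T, ∀ u ∈ Set.Icc (0 : ℝ) T,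
      |ψ s - ψ u| ≤ L * |s - u| ^ α)
    (n : ℕ) (δn : ℝ) (hδ : 0 < δn) (hnδ : (n : ℝ) * δn ≤ T)
    (t : ℕ → ℝ) (ht0 : t 0 = 0)
    (htmem : ∀ k ≤ n, t k ∈ Set.Icc (0 : ℝ) T)
    (hquant : ∀ k ≤ n, ∫ s in (0 : ℝ)..(t k), ψ s = k * δn / T)
    (imax : ℕ) (himax : 1 ≤ imax) :
    ∀ k i : ℕ, 1 ≤ i → i ≤ imax → k + i ≤ n →
      |t (k + i) - t k - (i * δn) / (T * ψ (t k))| ≤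
        (i * δn) / (T * ψ (t k)) *
          (L * ((T * sInf (ψ '' Set.Icc 0 T))⁻¹ * imax * δn) ^ α /
            sInf (ψ '' Set.Icc 0 T)) :=
  stmt_4_general T hT ψ hcont hinf L α hL hα hHolder n δn hδ t htmem hquant imax
end

section
/- Let μ be (r₀+1)-times continuously differentiable on [0,T], and let the design points satisfy C₁ j δ_n ≤ t_{k+j} − t_k ≤ C₂ j δ_n for constants 0 < C₁ ≤ C₂. Then for r ≥ r₀+1 and r* = r₀+1, |∑_{i=0}^{r} b_{ikr}^{(u)} μ(t_{k+iu})| ≤ K · δ_n^{−(r − r*)} for a constant K depending only on r, u, C₁, C₂, T and sup|μ^{(r*)}|; in particular the divided difference of μ of order r = r₀+1 is uniformly bounded in n and k. -/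
open Finset Set Polynomial
open scoped Nat

/-!
Subtract from `μ` its Taylor polynomial of degree `r₀` at the left end `t k` of the nodes. A
divided difference of order `r > r₀` is the leading coefficient of the interpolating polynomial,
so it annihilates polynomials of degree `< r`, and only the Taylor remainder is left. That
remainder is `O(δ^(r₀+1))` at every node, while each of the `r + 1` weights
`1 / ∏_{m ≠ i} (t_{k+iu} − t_{k+mu})` is `O(δ^(-r))` because distinct nodes are at least
`C₁ u δ` apart.
-/

def dividedDifference {F : Type*} [Field F] {N : ℕ} (v : Fin (N + 1) → F) (f : F → F) : F :=
  ∑ i, f (v i) / ∏ m ∈ univ.erase i, (v i - v m)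

section DividedDifference

variable {F : Type*} [Field F] {N : ℕ} {v : Fin (N + 1) → F}

theorem dividedDifference_sub (f g : F → F) :
    dividedDifference v (fun x => f x - g x) = dividedDifference v f - dividedDifference v g := by
  simp only [dividedDifference, sub_div, sum_sub_distrib]

theorem dividedDifference_eval_eq_zero (hv : Function.Injective v) {p : F[X]}
    (hp : p.degree < N) : dividedDifference v (fun x => p.eval x) = 0 := by
  have hcard : (#(univ : Finset (Fin (N + 1))) : WithBot ℕ) = N + 1 := by simp
  have h := Lagrange.coeff_eq_sum hv.injOn (hp.trans (by rw [hcard]; exact_mod_cast N.lt_succ_self))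
  rw [Finset.card_univ, Fintype.card_fin, Nat.add_sub_cancel, coeff_eq_zero_of_degree_lt hp] at h
  exact h.symm

end DividedDifference

theorem abs_dividedDifference_le {N : ℕ} {v : Fin (N + 1) → ℝ} {f : ℝ → ℝ} {h E : ℝ}
    (hh : 0 < h) (hsep : ∀ i j, i ≠ j → h ≤ |v i - v j|) (hf : ∀ i, |f (v i)| ≤ E) :
    |dividedDifference v f| ≤ (N + 1) * E / h ^ N := by
  have hterm : ∀ i, |f (v i) / ∏ m ∈ univ.erase i, (v i - v m)| ≤ E / h ^ N := by
    intro i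
    have hprod : h ^ N ≤ |∏ m ∈ univ.erase i, (v i - v m)| := by
      rw [abs_prod]
      calc h ^ N = ∏ _m ∈ univ.erase i, h := by simp
        _ ≤ _ := prod_le_prod (fun _ _ => hh.le) fun m hm => hsep i m (ne_of_mem_erase hm).symm
    rw [abs_div]
    exact div_le_div₀ ((abs_nonneg _).trans (hf i)) (hf i) (by positivity) hprod
  calc |dividedDifference v f| ≤ ∑ i, |f (v i) / ∏ m ∈ univ.erase i, (v i - v m)| :=
        abs_sum_le_sum_abs _ _
    _ ≤ ∑ _i : Fin (N + 1), E / h ^ N := sum_le_sum fun i _ => hterm i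
    _ = (N + 1) * E / h ^ N := by simp; ring

theorem exists_polynomial_eval_eq_taylorWithinEval (f : ℝ → ℝ) (n : ℕ) (s : Set ℝ)
    (x₀ : ℝ) : ∃ p : ℝ[X], p.natDegree ≤ n ∧ ∀ x, p.eval x = taylorWithinEval f n s x₀ x := by
  refine ⟨∑ k ∈ range (n + 1),
      C ((k ! : ℝ)⁻¹ * iteratedDerivWithin k f s x₀) * (X - C x₀) ^ k,
    natDegree_sum_le_of_forall_le _ _ fun k hk => ?_, fun x => ?_⟩
  · refine (natDegree_C_mul_le _ _).trans (natDegree_pow_le.trans ?_)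
    rw [natDegree_X_sub_C, mul_one]
    exact Nat.lt_succ_iff.mp (mem_range.mp hk)
  · simp only [taylor_within_apply, eval_finsetSum, eval_mul, eval_C, eval_pow, eval_sub, eval_X,
      smul_eq_mul]
    exact sum_congr rfl fun k _ => by ring

theorem iteratedDerivWithin_subset {𝕜 E : Type*} [NontriviallyNormedField 𝕜]
    [NormedAddCommGroup E] [NormedSpace 𝕜 E] {f : 𝕜 → E} {s t : Set 𝕜} {n : ℕ} {x : 𝕜}
    (st : s ⊆ t) (hs : UniqueDiffOn 𝕜 s) (ht : UniqueDiffOn 𝕜 t) (hf : ContDiffOn 𝕜 n f t)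
    (hx : x ∈ s) : iteratedDerivWithin n f s x = iteratedDerivWithin n f t x := by
  simp only [iteratedDerivWithin_eq_iteratedFDerivWithin,
    iteratedFDerivWithin_subset st hs ht hf hx]

theorem exists_pos_bound_iteratedDerivWithin {f : ℝ → ℝ} {n : ℕ} {α β : ℝ}
    (hαβ : α < β) (hf : ContDiffOn ℝ n f (Icc α β)) :
    ∃ M, 0 < M ∧ ∀ y ∈ Icc α β, |iteratedDerivWithin n f (Icc α β) y| ≤ M := by
  obtain ⟨B, hB⟩ := isCompact_Icc.exists_bound_of_continuousOn
    (hf.continuousOn_iteratedDerivWithin le_rfl (uniqueDiffOn_Icc hαβ))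
  exact ⟨max B 1, by positivity, fun y hy => (hB y hy).trans (le_max_left _ _)⟩

theorem taylor_remainder_le_of_Icc_subset {f : ℝ → ℝ} {n : ℕ} {α β a b x C : ℝ}
    (hαβ : α < β) (hf : ContDiffOn ℝ ((n + 1 : ℕ) : ℕ∞) f (Icc α β))
    (hC : ∀ y ∈ Icc α β, |iteratedDerivWithin (n + 1) f (Icc α β) y| ≤ C)
    (hab : a < b) (hsub : Icc a b ⊆ Icc α β) (hx : x ∈ Icc a b) :
    |f x - taylorWithinEval f n (Icc a b) a x| ≤ C * (x - a) ^ (n + 1) / n ! := by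
  refine taylor_mean_remainder_bound hab.le (by exact_mod_cast hf.mono hsub) hx fun y hy => ?_
  rw [iteratedDerivWithin_subset hsub (uniqueDiffOn_Icc hab) (uniqueDiffOn_Icc hαβ) hf hy]
  exact hC y (hsub hy)

theorem abs_dividedDifference_le_of_contDiffOn {f : ℝ → ℝ} {n N : ℕ} (hnN : n < N)
    {α β a b h C : ℝ} (hαβ : α < β) (hf : ContDiffOn ℝ ((n + 1 : ℕ) : ℕ∞) f (Icc α β))
    (hC : ∀ y ∈ Icc α β, |iteratedDerivWithin (n + 1) f (Icc α β) y| ≤ C)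
    (hab : a < b) (hsub : Icc a b ⊆ Icc α β) {v : Fin (N + 1) → ℝ} (hv : ∀ i, v i ∈ Icc a b)
    (hh : 0 < h) (hsep : ∀ i j, i ≠ j → h ≤ |v i - v j|) :
    |dividedDifference v f| ≤ (N + 1) * (C * (b - a) ^ (n + 1) / n !) / h ^ N := by
  obtain ⟨p, hpdeg, hp⟩ := exists_polynomial_eval_eq_taylorWithinEval f n (Icc a b) a
  have hinj : Function.Injective v := fun i j hij => by
    by_contra hne
    have := hsep i j hne
    rw [hij, sub_self, abs_zero] at this
    exact hh.not_ge this
  have hC₀ : 0 ≤ C := (abs_nonneg _).trans (hC α ⟨le_rfl, hαβ.le⟩)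
  have htaylor : dividedDifference v f = dividedDifference v (fun x => f x - p.eval x) := by
    rw [dividedDifference_sub, dividedDifference_eval_eq_zero hinj
      (degree_le_natDegree.trans_lt (by exact_mod_cast hpdeg.trans_lt hnN)), sub_zero]
  rw [htaylor]
  refine abs_dividedDifference_le hh hsep fun i => ?_
  rw [hp]
  refine (taylor_remainder_le_of_Icc_subset hαβ hf hC hab hsub (hv i)).trans ?_
  have hvi := hv i
  gcongr
  · exact sub_nonneg.mpr hvi.1
  · exact hvi.2

section Design

variable {t : ℕ → ℝ} {n : ℕ} {c δ : ℝ}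

theorem le_sub_of_design (hdes : ∀ k j : ℕ, k + j ≤ n → c * j * δ ≤ t (k + j) - t k)
    {p q : ℕ} (hpq : p ≤ q) (hq : q ≤ n) : c * (q - p : ℕ) * δ ≤ t q - t p := by
  have h := hdes p (q - p) (by omega)
  rwa [Nat.add_sub_cancel' hpq] at h

theorem le_of_design (hdes : ∀ k j : ℕ, k + j ≤ n → c * j * δ ≤ t (k + j) - t k)
    (hc : 0 ≤ c) (hδ : 0 ≤ δ) {p q : ℕ} (hpq : p ≤ q) (hq : q ≤ n) : t p ≤ t q :=
  sub_nonneg.mp ((mul_nonneg (mul_nonneg hc (Nat.cast_nonneg _)) hδ).trans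
    (le_sub_of_design hdes hpq hq))

theorem le_abs_sub_of_design (hdes : ∀ k j : ℕ, k + j ≤ n → c * j * δ ≤ t (k + j) - t k)
    (hc : 0 ≤ c) (hδ : 0 ≤ δ) {k r u : ℕ} (hk : k + r * u ≤ n) {i j : Fin (r + 1)} (hij : i ≠ j) :
    c * u * δ ≤ |t (k + i * u) - t (k + j * u)| := by
  have key : ∀ i j : Fin (r + 1), i < j → c * u * δ ≤ t (k + j * u) - t (k + i * u) := by
    intro i j hij
    have hle : i * u ≤ j * u := Nat.mul_le_mul_right u hij.le
    have hj : j * u ≤ r * u := Nat.mul_le_mul_right u (Nat.lt_succ_iff.mp j.isLt)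
    refine le_trans ?_ (le_sub_of_design hdes (by omega) (by omega))
    have hgap : u ≤ k + j * u - (k + i * u) := by
      rw [Nat.add_sub_add_left, ← Nat.sub_mul]
      exact Nat.le_mul_of_pos_left u (Nat.sub_pos_of_lt hij)
    gcongr
  rcases lt_or_gt_of_ne hij with h | h
  · rw [abs_sub_comm]; exact (key i j h).trans (le_abs_self _)
  · exact (key j i h).trans (le_abs_self _)

theorem mem_Icc_of_design (hdes : ∀ k j : ℕ, k + j ≤ n → c * j * δ ≤ t (k + j) - t k)
    (hc : 0 ≤ c) (hδ : 0 ≤ δ) {k r u : ℕ} (hk : k + r * u ≤ n) (i : Fin (r + 1)) :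
    t (k + i * u) ∈ Icc (t k) (t (k + r * u)) := by
  have hi : i * u ≤ r * u := Nat.mul_le_mul_right u (Nat.lt_succ_iff.mp i.isLt)
  exact ⟨le_of_design hdes hc hδ (by omega) (by omega), le_of_design hdes hc hδ (by omega) hk⟩

end Design

/-- Uniform bound for divided differences of a smooth mean function: if
`μ ∈ C^{r₀+1}([0,T])` and the design satisfies `C₁ j δ ≤ t(k+j) − t(k) ≤ C₂ j δ`,
then for `r ≥ r₀ + 1` the divided difference of order `r` of `μ` is bounded by
`K δ^{−(r − (r₀+1))}` for a constant `K` not depending on `n`, `δ`, `t`, `k`. -/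
theorem stmt_14 (T : ℝ) (hT : 0 < T) (r₀ r u : ℕ) (hu : 1 ≤ u) (hr : r₀ + 1 ≤ r)
    (C₁ C₂ : ℝ) (hC₁ : 0 < C₁) (hC₁₂ : C₁ ≤ C₂)
    (μ : ℝ → ℝ) (hμ : ContDiffOn ℝ ((r₀ + 1 : ℕ) : ℕ∞) μ (Set.Icc 0 T)) :
    ∃ K : ℝ, 0 < K ∧
      ∀ (n : ℕ) (δ : ℝ), 0 < δ →
        ∀ t : ℕ → ℝ,
          (∀ j ≤ n, t j ∈ Set.Icc (0 : ℝ) T) →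
          (∀ k j : ℕ, k + j ≤ n → C₁ * j * δ ≤ t (k + j) - t k ∧ t (k + j) - t k ≤ C₂ * j * δ) →
          ∀ k : ℕ, k + r * u ≤ n →
            |∑ i : Fin (r + 1),
                μ (t (k + i.val * u)) /
                  ∏ m ∈ Finset.univ.erase i, (t (k + i.val * u) - t (k + m.val * u))| ≤
              K / δ ^ (r - (r₀ + 1)) := by
  have hC₂ : 0 < C₂ := hC₁.trans_le hC₁₂
  have hu' : (0 : ℝ) < u := by exact_mod_cast hu
  have hr' : (0 : ℝ) < r := by exact_mod_cast (Nat.succ_pos r₀).trans_le hr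
  obtain ⟨M, hM, hMμ⟩ := exists_pos_bound_iteratedDerivWithin hT hμ
  refine ⟨(r + 1) * (M * (C₂ * r * u) ^ (r₀ + 1) / r₀ !) / (C₁ * u) ^ r, by positivity, ?_⟩
  intro n δ hδ t ht hdes k hk
  have hlow : ∀ k j : ℕ, k + j ≤ n → C₁ * j * δ ≤ t (k + j) - t k := fun k j h => (hdes k j h).1
  have hv := mem_Icc_of_design hlow hC₁.le hδ.le hk
  have hsep : ∀ i j : Fin (r + 1), i ≠ j → C₁ * u * δ ≤ |t (k + i * u) - t (k + j * u)| :=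
    fun i j => le_abs_sub_of_design hlow hC₁.le hδ.le hk
  have hab : t k < t (k + r * u) := by
    have hspan := hlow k (r * u) hk
    have hpos : 0 < C₁ * ((r * u : ℕ) : ℝ) * δ :=
      mul_pos (mul_pos hC₁ (by push_cast; exact mul_pos hr' hu')) hδ
    linarith
  have hwidth : t (k + r * u) - t k ≤ C₂ * r * u * δ := by
    have := (hdes k (r * u) hk).2; push_cast at this; linarith
  calc _ ≤ (r + 1) * (M * (t (k + r * u) - t k) ^ (r₀ + 1) / r₀ !) / (C₁ * u * δ) ^ r :=
        abs_dividedDifference_le_of_contDiffOn hr hT hμ hMμ hab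
          (Icc_subset_Icc (ht k (by omega)).1 (ht _ hk).2) hv (by positivity) hsep
    _ ≤ (r + 1) * (M * (C₂ * r * u * δ) ^ (r₀ + 1) / r₀ !) / (C₁ * u * δ) ^ r := by
        gcongr
    _ = _ := by
        obtain ⟨d, rfl⟩ := Nat.exists_eq_add_of_le' hr
        rw [Nat.add_sub_cancel]
        field_simp
        ring
end

section
/- Let X be a centered Gaussian process on [0,T] whose covariance K satisfies the Hölder-type increment bound E(X(s) − X(t))² ≤ M |s − t|^{2β} for all s,t ∈ [0,T], with β ∈ (0,1). Let X̃_r be the piecewise Lagrange interpolation of order r on nodes satisfying C₁ j δ ≤ t_{kr+j} − t_{kr} ≤ C₂ j δ. Then sup_{t ∈ I_k} E(X(t) − X̃_r(t))² ≤ M ((r+1)(C₂ r/C₁)^r)² (C₂ r δ)^{2β}; in particular the uniform mean-square interpolation error is O(δ^{2β}). -/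
open MeasureTheory Finset

/-!
Since the Lagrange weights `L_i(t)` sum to one, the interpolation error is
`X(t) - X̃_r(t) = ∑ L_i(t) (X(t) - X(t_i))`, a combination of increments over distances at most
`C₂ r δ`. Each weight is at most `(C₂ r / C₁)^r` in absolute value, because `|t - t_j| ≤ C₂ r δ`
and `|t_i - t_j| ≥ C₁ δ`. Pointwise Cauchy–Schwarz, `(∑ L_i f_i)² ≤ (∑ L_i²)(∑ f_i²)`, and the
increment bound then give the mean-square estimate.
-/

theorem Lagrange.eval_basis {F ι : Type*} [Field F] [DecidableEq ι] (s : Finset ι) (v : ι → F)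
    (i : ι) (t : F) :
    (Lagrange.basis s v i).eval t = ∏ j ∈ s.erase i, (t - v j) / (v i - v j) := by
  simp only [Lagrange.basis, Lagrange.basisDivisor, Polynomial.eval_prod, Polynomial.eval_mul,
    Polynomial.eval_C, Polynomial.eval_sub, Polynomial.eval_X, div_eq_inv_mul]

theorem sum_lagrange_coeff_eq_one {F ι : Type*} [Field F] [DecidableEq ι] {s : Finset ι}
    {v : ι → F} (hvs : Set.InjOn v s) (hs : s.Nonempty) (t : F) :
    ∑ i ∈ s, ∏ j ∈ s.erase i, (t - v j) / (v i - v j) = 1 := by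
  simpa [Polynomial.eval_finsetSum, Lagrange.eval_basis] using
    congrArg (Polynomial.eval t) (Lagrange.sum_basis hvs hs)

theorem abs_lagrange_coeff_le {ι : Type*} [DecidableEq ι] {s : Finset ι} {v : ι → ℝ} {i : ι}
    (hi : i ∈ s) {t A a : ℝ} (ha : 0 < a) (ht : ∀ j ∈ s, |t - v j| ≤ A)
    (hv : ∀ j ∈ s, j ≠ i → a ≤ |v i - v j|) :
    |∏ j ∈ s.erase i, (t - v j) / (v i - v j)| ≤ (A / a) ^ (#s - 1) := by
  rw [abs_prod, ← card_erase_of_mem hi, ← prod_const]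
  refine prod_le_prod (fun j _ => abs_nonneg _) fun j hj => ?_
  obtain ⟨hji, hj⟩ := mem_erase.mp hj
  rw [abs_div]
  exact div_le_div₀ ((abs_nonneg _).trans (ht j hj)) (ht j hj) ha (hv j hj hji)

theorem integral_sq_sum_mul_le {Ω ι : Type*} [MeasurableSpace Ω] {μ : Measure Ω}
    (s : Finset ι) (c : ι → ℝ) (f : ι → Ω → ℝ) (hf : ∀ i ∈ s, MemLp (f i) 2 μ) {b K : ℝ}
    (hc : ∀ i ∈ s, |c i| ≤ b) (hK : ∀ i ∈ s, ∫ ω, f i ω ^ 2 ∂μ ≤ K) :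
    ∫ ω, (∑ i ∈ s, c i * f i ω) ^ 2 ∂μ ≤ (#s * b) ^ 2 * K := by
  have hc2 : ∑ i ∈ s, c i ^ 2 ≤ #s * b ^ 2 := by
    refine (sum_le_card_nsmul s _ _ fun i hi => ?_).trans_eq (nsmul_eq_mul _ _)
    simpa only [sq_abs] using pow_le_pow_left₀ (abs_nonneg _) (hc i hi) 2
  have hf2 : ∑ i ∈ s, ∫ ω, f i ω ^ 2 ∂μ ≤ #s * K :=
    (sum_le_card_nsmul s _ _ hK).trans_eq (nsmul_eq_mul _ _)
  calc ∫ ω, (∑ i ∈ s, c i * f i ω) ^ 2 ∂μ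
      ≤ ∫ ω, (∑ i ∈ s, c i ^ 2) * ∑ i ∈ s, f i ω ^ 2 ∂μ :=
        integral_mono_of_nonneg (.of_forall fun _ => sq_nonneg _)
          ((integrable_finsetSum s fun i hi => (hf i hi).integrable_sq).const_mul _)
          (.of_forall fun ω => sum_mul_sq_le_sq_mul_sq s c (f · ω))
    _ = (∑ i ∈ s, c i ^ 2) * ∑ i ∈ s, ∫ ω, f i ω ^ 2 ∂μ := by
        rw [integral_const_mul, integral_finsetSum s fun i hi => (hf i hi).integrable_sq]
    _ ≤ (#s * b ^ 2) * (#s * K) :=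
        mul_le_mul hc2 hf2 (sum_nonneg fun _ _ => integral_nonneg fun _ => sq_nonneg _)
          (by positivity)
    _ = (#s * b) ^ 2 * K := by ring

def NodesSpacedBy {r : ℕ} (C₁ C₂ δ : ℝ) (x : Fin (r + 1) → ℝ) : Prop :=
  ∀ i j : Fin (r + 1), i ≤ j →
    C₁ * ((j.val - i.val : ℕ) : ℝ) * δ ≤ x j - x i ∧ x j - x i ≤ C₂ * ((j.val - i.val : ℕ) : ℝ) * δ

namespace NodesSpacedBy

variable {r : ℕ} {C₁ C₂ δ : ℝ} {x : Fin (r + 1) → ℝ}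

theorem mul_le_sub (hsp : NodesSpacedBy C₁ C₂ δ x) (hC₁ : 0 ≤ C₁) (hδ : 0 ≤ δ) {i j : Fin (r + 1)}
    (hij : i < j) : C₁ * δ ≤ x j - x i := by
  have hji : (1 : ℝ) ≤ ((j.val - i.val : ℕ) : ℝ) := by exact_mod_cast Nat.sub_pos_of_lt hij
  calc C₁ * δ = C₁ * 1 * δ := by ring
    _ ≤ C₁ * ((j.val - i.val : ℕ) : ℝ) * δ := by gcongr
    _ ≤ x j - x i := (hsp i j hij.le).1

theorem mul_le_abs_sub (hsp : NodesSpacedBy C₁ C₂ δ x) (hC₁ : 0 ≤ C₁) (hδ : 0 ≤ δ)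
    {i j : Fin (r + 1)} (hij : i ≠ j) : C₁ * δ ≤ |x i - x j| := by
  rcases hij.lt_or_gt with h | h
  · exact (hsp.mul_le_sub hC₁ hδ h).trans ((le_abs_self _).trans_eq (abs_sub_comm _ _))
  · exact (hsp.mul_le_sub hC₁ hδ h).trans (le_abs_self _)

theorem injective (hsp : NodesSpacedBy C₁ C₂ δ x) (hC₁ : 0 < C₁) (hδ : 0 < δ) :
    Function.Injective x := fun i j hxij => by
  by_contra hij
  have := hsp.mul_le_abs_sub hC₁.le hδ.le hij
  rw [hxij, sub_self, abs_zero] at this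
  exact this.not_gt (mul_pos hC₁ hδ)

theorem abs_sub_le (hsp : NodesSpacedBy C₁ C₂ δ x) (hC₁ : 0 ≤ C₁) (hδ : 0 ≤ δ) {t : ℝ}
    (ht : t ∈ Set.Icc (x 0) (x (Fin.last r))) (j : Fin (r + 1)) : |t - x j| ≤ C₂ * r * δ := by
  have h0 := (hsp 0 j (Fin.zero_le j)).1
  have hlast := (hsp j (Fin.last r) (Fin.le_last j)).1
  have hwidth := (hsp 0 (Fin.last r) (Fin.zero_le _)).2
  simp only [Fin.val_zero, Fin.val_last, Nat.sub_zero] at h0 hlast hwidth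
  have : 0 ≤ C₁ * (j.val : ℝ) * δ := by positivity
  have : 0 ≤ C₁ * ((r - j.val : ℕ) : ℝ) * δ := by positivity
  rw [abs_le]
  constructor <;> linarith [ht.1, ht.2]

end NodesSpacedBy

theorem stmt_18_general {Ω : Type*} [MeasurableSpace Ω] (P : Measure Ω)
    (X : ℝ → Ω → ℝ)
    (hL2 : ∀ t : ℝ, MemLp (X t) 2 P)
    (M β : ℝ) (hM : 0 ≤ M) (hβ : β ∈ Set.Ioo (0 : ℝ) 1)
    (hHolder : ∀ s u : ℝ, ∫ ω, (X s ω - X u ω) ^ 2 ∂P ≤ M * |s - u| ^ (2 * β))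
    (r : ℕ) (δ C₁ C₂ : ℝ) (hδ : 0 < δ) (hC₁ : 0 < C₁)
    (x : Fin (r + 1) → ℝ)
    (hsp : ∀ i j : Fin (r + 1), i ≤ j →
      C₁ * ((j.val - i.val : ℕ) : ℝ) * δ ≤ x j - x i ∧
      x j - x i ≤ C₂ * ((j.val - i.val : ℕ) : ℝ) * δ) :
    ∀ t ∈ Set.Icc (x 0) (x (Fin.last r)),
      ∫ ω, (X t ω -
          ∑ i, (∏ j ∈ Finset.univ.erase i, (t - x j) / (x i - x j)) * X (x i) ω) ^ 2 ∂P ≤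
        M * ((r + 1 : ℝ) * (C₂ * r / C₁) ^ r) ^ 2 * (C₂ * r * δ) ^ (2 * β) := by
  intro t ht
  set c : Fin (r + 1) → ℝ := fun i => ∏ j ∈ univ.erase i, (t - x j) / (x i - x j)
  have hnear (j) : |t - x j| ≤ C₂ * r * δ := NodesSpacedBy.abs_sub_le hsp hC₁.le hδ.le ht j
  have hc (i) : |c i| ≤ (C₂ * r / C₁) ^ r := by
    have := abs_lagrange_coeff_le (mem_univ i) (mul_pos hC₁ hδ) (fun j _ => hnear j)
      fun j _ hji => NodesSpacedBy.mul_le_abs_sub hsp hC₁.le hδ.le hji.symm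
    rwa [card_univ, Fintype.card_fin, add_tsub_cancel_right, mul_div_mul_right _ _ hδ.ne']
      at this
  have hincr (i) : ∫ ω, (X t ω - X (x i) ω) ^ 2 ∂P ≤ M * (C₂ * r * δ) ^ (2 * β) := by
    have : 0 ≤ 2 * β := by linarith [hβ.1]
    exact (hHolder t (x i)).trans (by gcongr; exact hnear i)
  have herr (ω) : X t ω - ∑ i, c i * X (x i) ω = ∑ i, c i * (X t ω - X (x i) ω) := by
    have hsum : ∑ i, c i = 1 :=
      sum_lagrange_coeff_eq_one (NodesSpacedBy.injective hsp hC₁ hδ).injOn univ_nonempty t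
    simp only [mul_sub, sum_sub_distrib, ← sum_mul, hsum, one_mul]
  calc ∫ ω, (X t ω - ∑ i, c i * X (x i) ω) ^ 2 ∂P
      = ∫ ω, (∑ i, c i * (X t ω - X (x i) ω)) ^ 2 ∂P := by simp only [herr]
    _ ≤ (#(univ : Finset (Fin (r + 1))) * (C₂ * r / C₁) ^ r) ^ 2 * (M * (C₂ * r * δ) ^ (2 * β)) :=
        integral_sq_sum_mul_le univ c _ (fun _ _ => (hL2 t).sub (hL2 _)) (fun i _ => hc i)
          fun i _ => hincr i
    _ = M * ((r + 1 : ℝ) * (C₂ * r / C₁) ^ r) ^ 2 * (C₂ * r * δ) ^ (2 * β) := by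
        rw [card_univ, Fintype.card_fin]; push_cast; ring

/-- Mean-square Lagrange interpolation error bound under a Hölder increment
condition: `sup_{t ∈ I_k} E(X(t) − X̃_r(t))² ≤ M ((r+1)(C₂ r/C₁)^r)² (C₂ r δ)^{2β}`. -/
theorem stmt_18 {Ω : Type*} [MeasurableSpace Ω] (P : Measure Ω) [IsProbabilityMeasure P]
    (X : ℝ → Ω → ℝ)
    (hL2 : ∀ t : ℝ, MemLp (X t) 2 P)
    (M β : ℝ) (hM : 0 ≤ M) (hβ : β ∈ Set.Ioo (0 : ℝ) 1)
    (hHolder : ∀ s u : ℝ, ∫ ω, (X s ω - X u ω) ^ 2 ∂P ≤ M * |s - u| ^ (2 * β))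
    (r : ℕ) (hr : 1 ≤ r) (δ C₁ C₂ : ℝ) (hδ : 0 < δ) (hC₁ : 0 < C₁) (hC₁₂ : C₁ ≤ C₂)
    (x : Fin (r + 1) → ℝ)
    (hsp : ∀ i j : Fin (r + 1), i ≤ j →
      C₁ * ((j.val - i.val : ℕ) : ℝ) * δ ≤ x j - x i ∧
      x j - x i ≤ C₂ * ((j.val - i.val : ℕ) : ℝ) * δ) :
    ∀ t ∈ Set.Icc (x 0) (x (Fin.last r)),
      ∫ ω, (X t ω -
          ∑ i, (∏ j ∈ Finset.univ.erase i, (t - x j) / (x i - x j)) * X (x i) ω) ^ 2 ∂P ≤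
        M * ((r + 1 : ℝ) * (C₂ * r / C₁) ^ r) ^ 2 * (C₂ * r * δ) ^ (2 * β) :=
  stmt_18_general P X hL2 M β hM hβ hHolder r δ C₁ C₂ hδ hC₁ x hsp
end
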